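/- Under the stability assumption, for any fixed β ∈ (0,1), the random variable α̂_d(β) := (1/d) Σ_{j=1}^{⌊βd⌋} X*_{d,(j)} converges in probability, as d → ∞, to ∫_0^β Q*(q) dq; in particular E[α̂_d(β)] = (1/d) Σ_{j=1}^{⌊βd⌋} p*_{d,(j)} → ∫_0^β Q*(q) dq and Var(α̂_d(β)) ≤ 1/(4d). -/

import Mathlib

/-!
The means are exact, `E X*_{d,i} = p*_{d,i}`, and the `X*` are independent with values in `[0,1]`,
so `Var α̂_d(β) ≤ ⌊βd⌋ / (4d²) ≤ 1/(4d)`; by Chebyshev, convergence in probability reduces to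
convergence of the means.

For the means, the layer-cake formula and the sorted order give
`(1/d) Σ_{j<k} p*_{d,(j)} = ∫_0^{1/2} (k/d - F*_d(t))⁺ dt`, where `F*_d` is the empirical cdf of the
`p*_{d,i}`. For `t < 1/2`, `{p* ≤ t}` is the disjoint union of `{p ≤ t}` and `{p ≥ 1 - t}`, so
stability gives `F*_d(t) → F*(t)`: `F` is continuous, since on `[0,1/2]` the continuous `F*` is the
sum of the two nondecreasing functions `F(t)` and `1 - F(1 - t)`. Dominated convergence then yields
`∫_0^{1/2} (β - F*(t))⁺ dt`, which is `∫_0^β Q*` by the layer-cake formula for `Q*`.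
-/

open Finset MeasureTheory ProbabilityTheory Filter Topology

theorem MonotoneOn.continuousWithinAt_of_add {α : Type*} [LinearOrder α] [TopologicalSpace α]
    {f g : α → ℝ} {s : Set α} {x : α} (hf : MonotoneOn f s) (hg : MonotoneOn g s) (hx : x ∈ s)
    (hfg : ContinuousWithinAt (fun y => f y + g y) s x) : ContinuousWithinAt f s x := by
  have hle : ∀ y ∈ s, dist (f y) (f x) ≤ dist (f y + g y) (f x + g x) := by
    intro y hy
    rw [Real.dist_eq, Real.dist_eq, add_sub_add_comm]
    rcases le_total y x with h | h
    · have := hf hy hx h; have := hg hy hx h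
      rw [abs_of_nonpos (by linarith), abs_of_nonpos (by linarith)]; linarith
    · have := hf hx hy h; have := hg hx hy h
      rw [abs_of_nonneg (by linarith), abs_of_nonneg (by linarith)]; linarith
  rw [ContinuousWithinAt, tendsto_iff_dist_tendsto_zero] at hfg ⊢
  refine squeeze_zero' (.of_forall fun _ => dist_nonneg) ?_ hfg
  filter_upwards [self_mem_nhdsWithin] with y hy using hle y hy

theorem MonotoneOn.continuousOn_of_symm_add {F : ℝ → ℝ} (hF : MonotoneOn F (Set.Icc 0 1))
    (hsum : ContinuousOn (fun t => F t + 1 - F (1 - t)) (Set.Icc 0 (1 / 2))) :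
    ContinuousOn F (Set.Icc 0 1) := by
  have hmaps : Set.MapsTo (fun t : ℝ => 1 - t) (Set.Icc 0 (1 / 2)) (Set.Icc 0 1) :=
    fun t ht => ⟨by linarith [ht.2], by linarith [ht.1]⟩
  have hF' : MonotoneOn F (Set.Icc 0 (1 / 2)) := hF.mono (Set.Icc_subset_Icc_right (by norm_num))
  have hrefl : MonotoneOn (fun t => 1 - F (1 - t)) (Set.Icc 0 (1 / 2)) :=
    fun a ha b hb hab => by
      have := hF (hmaps hb) (hmaps ha) (by linarith); linarith
  simp only [add_sub_assoc] at hsum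
  have hlow : ContinuousOn F (Set.Icc 0 (1 / 2)) := fun x hx =>
    hF'.continuousWithinAt_of_add hrefl hx (hsum x hx)
  have hrefl_cont : ContinuousOn (fun t => 1 - F (1 - t)) (Set.Icc 0 (1 / 2)) := fun x hx =>
    hrefl.continuousWithinAt_of_add hF' hx (by simpa only [add_comm] using hsum x hx)
  have hhigh : ContinuousOn F (Set.Icc (1 / 2) 1) := by
    have hcomp : ContinuousOn (fun s => 1 - (1 - F (1 - (1 - s)))) (Set.Icc (1 / 2) 1) :=
      continuousOn_const.sub (hrefl_cont.comp (f := fun s => 1 - s)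
        (continuousOn_const.sub continuousOn_id)
        fun s hs => ⟨by linarith [hs.2], by linarith [hs.1]⟩)
    exact hcomp.congr fun s _ => by simp
  rw [← Set.Icc_union_Icc_eq_Icc (by norm_num : (0 : ℝ) ≤ 1 / 2)
    (by norm_num : (1 / 2 : ℝ) ≤ 1)]
  exact hlow.union_of_isClosed hhigh isClosed_Icc isClosed_Icc

theorem ContinuousWithinAt.eq_of_tendsto_nhdsGT {F : ℝ → ℝ} {a b y : ℝ} (hab : a < b)
    (hF : ContinuousWithinAt F (Set.Icc a b) a) (h : Tendsto F (𝓝[>] a) (𝓝 y)) : F a = y :=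
  tendsto_nhds_unique ((nhdsWithin_Ioc_eq_nhdsGT hab) ▸ hF.mono Set.Ioc_subset_Icc_self) h

theorem ContinuousWithinAt.eq_of_tendsto_nhdsLT {F : ℝ → ℝ} {a b y : ℝ} (hab : a < b)
    (hF : ContinuousWithinAt F (Set.Icc a b) b) (h : Tendsto F (𝓝[<] b) (𝓝 y)) : F b = y :=
  tendsto_nhds_unique ((nhdsWithin_Ico_eq_nhdsLT hab) ▸ hF.mono Set.Ico_subset_Icc_self) h

section Sorted

variable {α : Type*} [LinearOrder α] {d : ℕ} {v : ℕ → α}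

theorem MonotoneOn.le_iff_lt_card_filter_le (hv : MonotoneOn v (Set.Iio d)) (t : α) {j : ℕ}
    (hj : j < d) : v j ≤ t ↔ j < #{i ∈ range d | v i ≤ t} := by
  constructor
  · intro hjt
    have hsub : range (j + 1) ⊆ {i ∈ range d | v i ≤ t} := fun i hi => by
      have hij : i ≤ j := Nat.lt_succ_iff.1 (mem_range.1 hi)
      exact mem_filter.2 ⟨mem_range.2 (hij.trans_lt hj),
        (hv (hij.trans_lt hj) hj hij).trans hjt⟩
    simpa using card_le_card hsub
  · intro hlt
    by_contra! htj
    have hsub : {i ∈ range d | v i ≤ t} ⊆ range j := fun i hi => by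
      rw [mem_filter, mem_range] at hi
      rw [mem_range]
      by_contra! hji
      exact (htj.trans_le (hv hj hi.1 hji)).not_ge hi.2
    simpa using (card_le_card hsub).trans_lt' hlt

theorem MonotoneOn.card_filter_lt {k : ℕ} (hv : MonotoneOn v (Set.Iio d)) (hk : k ≤ d) (t : α) :
    #{j ∈ range k | t < v j} = k - #{i ∈ range d | v i ≤ t} := by
  set c := #{i ∈ range d | v i ≤ t}
  have hfilter : {j ∈ range k | t < v j} = {j ∈ range k | c ≤ j} :=
    filter_congr fun j hj => by
      rw [← not_le, hv.le_iff_lt_card_filter_le t ((mem_range.1 hj).trans_le hk), not_lt]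
  rw [hfilter, range_eq_Ico, Ico_filter_le, Nat.card_Ico, max_eq_right (Nat.zero_le _)]

end Sorted

theorem sum_eq_integral_card_lt {k : ℕ} {v : ℕ → ℝ} {c : ℝ} (hv : ∀ j < k, v j ∈ Set.Icc 0 c) :
    ∑ j ∈ range k, v j = ∫ t in Set.Ioo 0 c, (#{j ∈ range k | t < v j} : ℝ) := by
  have hind : ∀ j t, (if t < v j then (1 : ℝ) else 0) = (Set.Iio (v j)).indicator 1 t :=
    fun j t => by simp [Set.indicator_apply]
  simp_rw [natCast_card_filter, hind]
  rw [integral_finsetSum _ fun j _ => (integrable_const 1).indicator measurableSet_Iio]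
  refine sum_congr rfl fun j hj => ?_
  obtain ⟨h0, hc⟩ := hv j (mem_range.1 hj)
  rw [integral_indicator_one measurableSet_Iio, measureReal_restrict_apply measurableSet_Iio,
    Set.Iio_inter_Ioo, min_eq_left hc, Real.volume_real_Ioo_of_le h0, sub_zero]

noncomputable def empiricalCDF (v : ℕ → ℝ) (d : ℕ) (t : ℝ) : ℝ := #{i ∈ range d | v i ≤ t} / d

theorem empiricalCDF_eq_mul_sum (v : ℕ → ℝ) (d : ℕ) (t : ℝ) :
    empiricalCDF v d t = 1 / (d : ℝ) * ∑ i ∈ range d, if v i ≤ t then (1 : ℝ) else 0 := by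
  rw [empiricalCDF, natCast_card_filter, one_div_mul_eq_div]

theorem card_filter_div_mono {d : ℕ} {w : ℕ → ℝ} {P Q : ℝ → Prop} [DecidablePred P]
    [DecidablePred Q] (h : ∀ x, P x → Q x) :
    (#{i ∈ range d | P (w i)} : ℝ) / d ≤ #{i ∈ range d | Q (w i)} / d :=
  div_le_div_of_nonneg_right (Nat.cast_le.2 (card_le_card fun _ hi =>
    mem_filter.2 ⟨(mem_filter.1 hi).1, h _ (mem_filter.1 hi).2⟩)) d.cast_nonneg

theorem monotone_empiricalCDF (v : ℕ → ℝ) (d : ℕ) : Monotone (empiricalCDF v d) :=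
  fun s t hst => card_filter_div_mono (P := (· ≤ s)) (Q := (· ≤ t)) fun _ hx => hx.trans hst

theorem empiricalCDF_nonneg (v : ℕ → ℝ) (d : ℕ) (t : ℝ) : 0 ≤ empiricalCDF v d t := by
  unfold empiricalCDF; positivity

theorem empiricalCDF_comp_of_bijOn {v : ℕ → ℝ} {d : ℕ} {σ : ℕ → ℕ}
    (hσ : Set.BijOn σ (Set.Iio d) (Set.Iio d)) (t : ℝ) :
    empiricalCDF (v ∘ σ) d t = empiricalCDF v d t := by
  unfold empiricalCDF
  congr 2
  refine card_nbij σ (fun j hj => ?_) (hσ.injOn.mono fun j hj => ?_) fun i hi => ?_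
  · simp only [coe_filter, mem_range, Set.mem_ofPred_eq] at hj ⊢
    exact ⟨hσ.mapsTo hj.1, hj.2⟩
  · exact mem_range.1 (mem_filter.1 hj).1
  · simp only [coe_filter, mem_range, Set.mem_ofPred_eq] at hi
    obtain ⟨j, hj, rfl⟩ := hσ.surjOn hi.1
    exact ⟨j, by simpa using ⟨hj, hi.2⟩, rfl⟩

theorem sum_sorted_div_eq_integral {d k : ℕ} {v : ℕ → ℝ} {σ : ℕ → ℕ} {c : ℝ}
    (hσ : Set.BijOn σ (Set.Iio d) (Set.Iio d)) (hmono : MonotoneOn (v ∘ σ) (Set.Iio d))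
    (hv : ∀ i < d, v i ∈ Set.Icc 0 c) (hk : k ≤ d) :
    1 / (d : ℝ) * ∑ j ∈ range k, v (σ j)
      = ∫ t in Set.Ioo 0 c, max ((k : ℝ) / d - empiricalCDF v d t) 0 := by
  rw [sum_eq_integral_card_lt fun j hj => hv _ (hσ.mapsTo (hj.trans_le hk)),
    ← integral_const_mul]
  refine setIntegral_congr_fun measurableSet_Ioo fun t _ => ?_
  have hcard := hmono.card_filter_lt hk t
  rw [← empiricalCDF_comp_of_bijOn hσ t, empiricalCDF]
  simp only [Function.comp_apply] at hcard ⊢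
  rw [hcard, one_div_mul_eq_div, ← sub_div]
  rcases le_total #{j ∈ range d | v (σ j) ≤ t} k with h | h
  · rw [Nat.cast_sub h, max_eq_left (div_nonneg (sub_nonneg.2 (Nat.cast_le.2 h)) d.cast_nonneg)]
  · rw [Nat.sub_eq_zero_of_le h, max_eq_right (div_nonpos_of_nonpos_of_nonneg
      (sub_nonpos.2 (Nat.cast_le.2 h)) d.cast_nonneg), Nat.cast_zero, zero_div]

theorem tendsto_sum_sorted_div {v : ℕ → ℕ → ℝ} {σ : ℕ → ℕ → ℕ} {c β : ℝ} {k : ℕ → ℕ}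
    {G : ℝ → ℝ} (hσ : ∀ d, Set.BijOn (σ d) (Set.Iio d) (Set.Iio d))
    (hmono : ∀ d, MonotoneOn (v d ∘ σ d) (Set.Iio d)) (hv : ∀ d, ∀ i < d, v d i ∈ Set.Icc 0 c)
    (hk : ∀ d, k d ≤ d) (hkβ : Tendsto (fun d : ℕ => (k d : ℝ) / d) atTop (𝓝 β))
    (hG : ∀ t ∈ Set.Ioo 0 c, Tendsto (fun d => empiricalCDF (v d) d t) atTop (𝓝 (G t))) :
    Tendsto (fun d : ℕ => 1 / (d : ℝ) * ∑ j ∈ range (k d), v d (σ d j)) atTop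
      (𝓝 (∫ t in Set.Ioo 0 c, max (β - G t) 0)) := by
  have hbound : ∀ d t, ‖max ((k d : ℝ) / d - empiricalCDF (v d) d t) 0‖ ≤ 1 := fun d t => by
    have hkd : (k d : ℝ) / d ≤ 1 := div_le_one_of_le₀ (Nat.cast_le.2 (hk d)) d.cast_nonneg
    rw [Real.norm_of_nonneg (le_max_right _ _)]
    exact max_le (by linarith [empiricalCDF_nonneg (v d) d t]) zero_le_one
  refine (tendsto_integral_of_dominated_convergence (fun _ => 1) (fun d => ?_)
    (integrable_const 1) (fun d => .of_forall (hbound d)) ?_).congr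
    fun d => (sum_sorted_div_eq_integral (hσ d) (hmono d) (hv d) (hk d)).symm
  · exact ((measurable_const.sub (monotone_empiricalCDF _ _).measurable).max
      measurable_const).aestronglyMeasurable
  · exact ae_restrict_of_forall_mem measurableSet_Ioo fun t ht =>
      (hkβ.sub (hG t ht)).max tendsto_const_nhds

theorem tendsto_card_filter_lt_div {v : ℕ → ℕ → ℝ} {F : ℝ → ℝ} {s : ℝ}
    (hconv : ∀ᶠ u in 𝓝[≤] s, Tendsto (fun d => empiricalCDF (v d) d u) atTop (𝓝 (F u)))
    (hleft : Tendsto F (𝓝[<] s) (𝓝 (F s))) :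
    Tendsto (fun d : ℕ => (#{i ∈ range d | v d i < s} : ℝ) / d) atTop (𝓝 (F s)) := by
  refine tendsto_order.2 ⟨fun a ha => ?_, fun b hb => ?_⟩
  · have hnear : ∀ᶠ u in 𝓝[<] s,
        a < F u ∧ Tendsto (fun d => empiricalCDF (v d) d u) atTop (𝓝 (F u)) :=
      (hleft.eventually
        (lt_mem_nhds ha)).and (hconv.filter_mono (nhdsWithin_mono _ Set.Iio_subset_Iic_self))
    obtain ⟨u, ⟨hau, hu⟩, hus⟩ := (hnear.and self_mem_nhdsWithin).exists
    filter_upwards [hu.eventually (lt_mem_nhds hau)] with d hd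
    exact hd.trans_le
      (card_filter_div_mono (P := (· ≤ u)) (Q := (· < s)) fun _ hx => hx.trans_lt hus)
  · filter_upwards [(hconv.self_of_nhdsWithin Set.self_mem_Iic).eventually (gt_mem_nhds hb)]
      with d hd
    exact (card_filter_div_mono (P := (· < s)) (Q := (· ≤ s)) fun _ hx => hx.le).trans_lt hd

theorem min_one_sub_mem_Icc {x : ℝ} (hx : x ∈ Set.Icc 0 1) : min x (1 - x) ∈ Set.Icc 0 (1 / 2) :=
  ⟨le_min hx.1 (by linarith [hx.2]),
    min_le_iff.2 ((le_total x (1 / 2)).imp id fun h => by linarith)⟩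

theorem card_filter_min_one_sub_le_add {d : ℕ} {p : ℕ → ℝ} {t : ℝ} (ht : t < 1 / 2) :
    #{i ∈ range d | min (p i) (1 - p i) ≤ t} + #{i ∈ range d | p i < 1 - t}
      = #{i ∈ range d | p i ≤ t} + d := by
  have hpt : ∀ i, ((if min (p i) (1 - p i) ≤ t then 1 else 0) + if p i < 1 - t then 1 else 0)
      = (if p i ≤ t then 1 else 0) + 1 := fun i => by
    rcases le_or_gt (p i) t with h1 | h1
    · simp [h1, show p i < 1 - t by linarith]
    · rcases lt_or_ge (p i) (1 - t) with h2 | h2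
      · simp [h1.not_ge, h2, show ¬1 ≤ t + p i by linarith]
      · simp [h1.not_ge, h2.not_gt, show 1 - p i ≤ t by linarith]
  simp only [card_filter, ← sum_add_distrib, hpt]
  rw [sum_add_distrib, sum_const, card_range, smul_eq_mul, mul_one]

theorem tendsto_empiricalCDF_min_one_sub {p : ℕ → ℕ → ℝ} {F : ℝ → ℝ}
    (hF : ContinuousOn F (Set.Icc 0 1))
    (hstab : ∀ u ∈ Set.Icc 0 1, Tendsto (fun d => empiricalCDF (p d) d u) atTop (𝓝 (F u)))
    {t : ℝ} (ht : t ∈ Set.Ico 0 (1 / 2)) :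
    Tendsto (fun d => empiricalCDF (fun i => min (p d i) (1 - p d i)) d t) atTop
      (𝓝 (F t + 1 - F (1 - t))) := by
  obtain ⟨ht0, ht2⟩ := ht
  have hs : 1 - t ∈ Set.Icc (0 : ℝ) 1 := ⟨by linarith, by linarith⟩
  have hleft : Tendsto F (𝓝[<] (1 - t)) (𝓝 (F (1 - t))) := by
    rw [← nhdsWithin_Ico_eq_nhdsLT (by linarith : (0 : ℝ) < 1 - t)]
    exact (hF _ hs).mono (Set.Ico_subset_Icc_self.trans (Set.Icc_subset_Icc_right hs.2))
  have hconv : ∀ᶠ u in 𝓝[≤] (1 - t),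
      Tendsto (fun d => empiricalCDF (p d) d u) atTop (𝓝 (F u)) := by
    filter_upwards [Ioc_mem_nhdsLE (by linarith : (0 : ℝ) < 1 - t)] with u hu
    exact hstab u ⟨hu.1.le, hu.2.trans hs.2⟩
  refine Tendsto.congr' ?_ (((hstab t ⟨ht0, by linarith⟩).add_const 1).sub
    (tendsto_card_filter_lt_div hconv hleft))
  filter_upwards [eventually_ne_atTop 0] with d hd
  have hcard := congrArg (Nat.cast (R := ℝ))
    (card_filter_min_one_sub_le_add (d := d) (p := p d) ht2)
  push_cast at hcard
  simp only [empiricalCDF]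
  field_simp
  linarith

noncomputable def quantile (G : ℝ → ℝ) (q : ℝ) : ℝ := sInf {t | t ∈ Set.Icc (0 : ℝ) 1 ∧ q ≤ G t}

section Quantile

variable {G : ℝ → ℝ} {a q : ℝ}

theorem quantile_le (ha : a ∈ Set.Icc 0 1) (hq : q ≤ G a) : quantile G q ≤ a :=
  csInf_le ⟨0, fun _ ht => ht.1.1⟩ ⟨ha, hq⟩

theorem quantile_mem (hG : ContinuousOn G (Set.Icc 0 1)) (ha : a ∈ Set.Icc 0 1) (hq : q ≤ G a) :
    quantile G q ∈ Set.Icc 0 1 ∧ q ≤ G (quantile G q) := by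
  have hK : IsCompact (Set.Icc 0 1 ∩ G ⁻¹' Set.Ici q) := isCompact_Icc.of_isClosed_subset
    (hG.preimage_isClosed_of_isClosed isClosed_Icc isClosed_Ici) Set.inter_subset_left
  exact hK.sInf_mem ⟨a, ha, hq⟩

theorem lt_quantile_iff (hG : ContinuousOn G (Set.Icc 0 1)) (hGm : MonotoneOn G (Set.Icc 0 1))
    (ha : a ∈ Set.Icc 0 1) (hq : q ≤ G a) {t : ℝ} (ht : t ∈ Set.Icc 0 1) :
    t < quantile G q ↔ G t < q := by
  refine ⟨fun htq => ?_, fun hGt => ?_⟩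
  · by_contra! hqt
    exact (quantile_le ht hqt).not_gt htq
  · by_contra! hqt
    have hmem := quantile_mem hG ha hq
    exact (hmem.2.trans (hGm hmem.1 ht hqt)).not_gt hGt

theorem monotoneOn_quantile (ha : a ∈ Set.Icc 0 1) : MonotoneOn (quantile G) (Set.Iic (G a)) :=
  fun _ _ _ hq' hqq' => csInf_le_csInf ⟨0, fun _ ht => ht.1.1⟩ ⟨a, ha, hq'⟩
    fun _ ht => ⟨ht.1, hqq'.trans ht.2⟩

theorem integral_quantile_eq (hG : ContinuousOn G (Set.Icc 0 1))
    (hGm : MonotoneOn G (Set.Icc 0 1)) (hG0 : 0 ≤ G 0) (ha : a ∈ Set.Icc 0 1) {β : ℝ}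
    (hβ0 : 0 ≤ β) (hβ : β ≤ G a) :
    ∫ q in 0..β, quantile G q = ∫ t in Set.Ioo 0 a, max (β - G t) 0 := by
  have hIoc : ∀ q ∈ Set.Ioc 0 β, q ≤ G a := fun q hq => hq.2.trans hβ
  have hint : IntegrableOn (quantile G) (Set.Ioc 0 β) :=
    ((monotoneOn_quantile ha).mono fun q hq => hq.2.trans hβ).integrableOn_isCompact
      isCompact_Icc |>.mono_set Set.Ioc_subset_Icc_self
  have hnn : 0 ≤ᵐ[volume.restrict (Set.Ioc 0 β)] quantile G :=
    ae_restrict_of_forall_mem measurableSet_Ioc fun q hq => (quantile_mem hG ha (hIoc q hq)).1.1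
  have hlayer : ∀ t ∈ Set.Ioi (0 : ℝ), (volume.restrict (Set.Ioc 0 β)).real {q | t < quantile G q}
      = (Set.Ioo 0 a).indicator (fun t => max (β - G t) 0) t := by
    intro t ht
    rw [measureReal_restrict_apply' measurableSet_Ioc]
    by_cases hta : t < a
    · have htI : t ∈ Set.Icc 0 1 := ⟨ht.le, hta.le.trans ha.2⟩
      have hGt : 0 ≤ G t := hG0.trans (hGm ⟨le_rfl, zero_le_one⟩ htI ht.le)
      have hset : {q | t < quantile G q} ∩ Set.Ioc 0 β = Set.Ioc (G t) β := by
        ext q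
        simp only [Set.mem_inter_iff, Set.mem_ofPred_eq, Set.mem_Ioc]
        constructor
        · rintro ⟨htq, -, hqβ⟩
          exact ⟨(lt_quantile_iff hG hGm ha (hqβ.trans hβ) htI).1 htq, hqβ⟩
        · rintro ⟨hGq, hqβ⟩
          exact ⟨(lt_quantile_iff hG hGm ha (hqβ.trans hβ) htI).2 hGq, hGt.trans_lt hGq, hqβ⟩
      rw [Set.indicator_of_mem (Set.mem_Ioo.2 ⟨ht, hta⟩), hset, Real.volume_real_Ioc]
    · have hset : {q | t < quantile G q} ∩ Set.Ioc 0 β = ∅ :=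
        Set.eq_empty_of_forall_notMem fun q hq =>
          hta (hq.1.trans_le (quantile_le ha (hIoc q hq.2)))
      rw [Set.indicator_of_notMem fun h => hta h.2, hset, measureReal_empty]
  rw [intervalIntegral.integral_of_le hβ0, hint.integral_eq_integral_meas_lt hnn,
    setIntegral_congr_fun measurableSet_Ioi hlayer, setIntegral_indicator measurableSet_Ioo,
    Set.inter_eq_right.2 Set.Ioo_subset_Ioi_self]

end Quantile

theorem Nat.floor_mul_le_self {β : ℝ} (hβ : β ≤ 1) (d : ℕ) : ⌊β * d⌋₊ ≤ d :=
  Nat.floor_le_of_le (mul_le_of_le_one_left d.cast_nonneg hβ)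

theorem tendsto_sum_sorted_div_intervalIntegral_quantile {p pstar : ℕ → ℕ → ℝ}
    {ord : ℕ → ℕ → ℕ} {F Fstar : ℝ → ℝ} {β : ℝ} (hp : ∀ d, ∀ i < d, p d i ∈ Set.Icc 0 1)
    (hpstar : ∀ d i, pstar d i = min (p d i) (1 - p d i))
    (hord_bij : ∀ d, Set.BijOn (ord d) (Set.Iio d) (Set.Iio d))
    (hord_mono : ∀ d, MonotoneOn (pstar d ∘ ord d) (Set.Iio d))
    (hF_mono : MonotoneOn F (Set.Icc 0 1)) (hF0 : Tendsto F (𝓝[>] 0) (𝓝 0))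
    (hF1 : Tendsto F (𝓝[<] 1) (𝓝 1))
    (hstab : ∀ t ∈ Set.Icc 0 1, ContinuousWithinAt F (Set.Icc 0 1) t →
      Tendsto (fun d => empiricalCDF (p d) d t) atTop (𝓝 (F t)))
    (hFstar : ∀ t ≤ 1 / 2, Fstar t = F t + 1 - F (1 - t))
    (hFstar_cont : ContinuousOn Fstar (Set.Icc 0 1))
    (hFstar_mono : MonotoneOn Fstar (Set.Icc 0 1)) (hβ : β ∈ Set.Ioo 0 1) :
    Tendsto (fun d : ℕ => 1 / (d : ℝ) * ∑ j ∈ range ⌊β * d⌋₊, pstar d (ord d j)) atTop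
      (𝓝 (∫ q in 0..β, quantile Fstar q)) := by
  have hFcont : ContinuousOn F (Set.Icc 0 1) := hF_mono.continuousOn_of_symm_add
    ((hFstar_cont.mono (Set.Icc_subset_Icc_right (by norm_num))).congr
      fun t ht => (hFstar t ht.2).symm)
  have hFstar0 : Fstar 0 = 0 := by
    rw [hFstar 0 (by norm_num), sub_zero,
      (hFcont 0 ⟨le_rfl, zero_le_one⟩).eq_of_tendsto_nhdsGT zero_lt_one hF0,
      (hFcont 1 ⟨zero_le_one, le_rfl⟩).eq_of_tendsto_nhdsLT zero_lt_one hF1]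
    norm_num
  have hFstar_half : Fstar (1 / 2) = 1 := by rw [hFstar _ le_rfl]; norm_num
  rw [integral_quantile_eq hFstar_cont hFstar_mono hFstar0.ge ⟨by norm_num, by norm_num⟩ hβ.1.le
    (hFstar_half ▸ hβ.2.le)]
  refine tendsto_sum_sorted_div hord_bij hord_mono
    (fun d i hi => hpstar d i ▸ min_one_sub_mem_Icc (hp d i hi)) (Nat.floor_mul_le_self hβ.2.le)
    ((tendsto_nat_floor_mul_div_atTop hβ.1.le).comp tendsto_natCast_atTop_atTop) fun t ht => ?_
  rw [hFstar t ht.2.le]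
  refine (tendsto_empiricalCDF_min_one_sub hFcont (fun u hu => hstab u hu (hFcont u hu))
    ⟨ht.1.le, ht.2⟩).congr fun d => ?_
  simp only [← hpstar]

section

variable {Ω : Type*} [MeasurableSpace Ω] {μ : Measure Ω}

theorem integral_eq_of_zero_or_one {Y : Ω → ℝ} {q : ℝ} (hY : Measurable Y)
    (h01 : ∀ ω, Y ω = 0 ∨ Y ω = 1) (hq : 0 ≤ q) (hμ : μ {ω | Y ω = 1} = ENNReal.ofReal q) :
    ∫ ω, Y ω ∂μ = q := by
  have hind : Y = (Y ⁻¹' {1}).indicator 1 := by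
    funext ω
    rcases h01 ω with h | h <;> simp [h]
  rw [hind, integral_indicator_one (hY (measurableSet_singleton 1)), measureReal_def]
  exact (congrArg ENNReal.toReal hμ).trans (ENNReal.toReal_ofReal hq)

theorem integral_ite_le_half_one_sub [IsProbabilityMeasure μ] {Y : Ω → ℝ} {q : ℝ}
    (hY : Integrable Y μ) (hq : ∫ ω, Y ω ∂μ = q) :
    ∫ ω, (if q ≤ 1 / 2 then Y ω else 1 - Y ω) ∂μ = min q (1 - q) := by
  split_ifs with h
  · rw [hq, min_eq_left (by linarith)]
  · rw [integral_sub (integrable_const 1) hY, hq, integral_const, probReal_univ, one_smul,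
      min_eq_right (by linarith)]

variable [IsProbabilityMeasure μ]

theorem variance_mul_sum_le {ι : Type*} {Y : ι → Ω → ℝ} {s : Finset ι} {d : ℕ} (hs : #s ≤ d)
    (hY : ∀ i ∈ s, Measurable (Y i)) (h01 : ∀ i ∈ s, ∀ ω, Y i ω ∈ Set.Icc 0 1)
    (hindep : (s : Set ι).Pairwise fun i j => IndepFun (Y i) (Y j) μ) :
    Var[fun ω => 1 / (d : ℝ) * ∑ i ∈ s, Y i ω; μ] ≤ 1 / (4 * d) := by
  have hvar : Var[∑ i ∈ s, Y i; μ] = ∑ i ∈ s, Var[Y i; μ] :=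
    IndepFun.variance_sum (fun i hi =>
      memLp_of_bounded (ae_of_all _ (h01 i hi)) (hY i hi).aestronglyMeasurable 2) hindep
  have hle : ∑ i ∈ s, Var[Y i; μ] ≤ #s / 4 := by
    calc ∑ i ∈ s, Var[Y i; μ] ≤ ∑ _i ∈ s, ((1 - 0) / 2 : ℝ) ^ 2 :=
          sum_le_sum fun i hi => variance_le_sq_of_bounded (ae_of_all _ (h01 i hi))
            (hY i hi).aemeasurable
      _ = #s / 4 := by rw [sum_const, nsmul_eq_mul]; ring
  simp_rw [← Finset.sum_apply _ s Y]
  rw [variance_const_mul, hvar]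
  calc (1 / (d : ℝ)) ^ 2 * ∑ i ∈ s, Var[Y i; μ] ≤ (1 / d) ^ 2 * (d / 4) :=
        mul_le_mul_of_nonneg_left (hle.trans (by gcongr)) (sq_nonneg _)
    _ = 1 / (4 * d) := by
        rcases eq_or_ne (d : ℝ) 0 with hd | hd
        · simp [hd]
        · field_simp

end

structure IsIndepUnitFamily {Ω : Type*} [MeasurableSpace Ω] (Y : ℕ → Ω → ℝ) (q : ℕ → ℝ) (d : ℕ)
    (μ : Measure Ω) : Prop where
  measurable : ∀ i < d, Measurable (Y i)
  mem_Icc : ∀ i < d, ∀ ω, Y i ω ∈ Set.Icc 0 1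
  integral_eq : ∀ i < d, ∫ ω, Y i ω ∂μ = q i
  indep : iIndepFun (fun i : Fin d => Y i) μ

namespace IsIndepUnitFamily

variable {Ω : Type*} [MeasurableSpace Ω] {μ : Measure Ω} {Y : ℕ → Ω → ℝ} {q : ℕ → ℝ}
  {d k : ℕ} {σ : ℕ → ℕ}

theorem of_bernoulli (hY : ∀ i, Measurable (Y i)) (h01 : ∀ i ω, Y i ω = 0 ∨ Y i ω = 1)
    (hq : ∀ i < d, q i ∈ Set.Icc 0 1) (hμ : ∀ i < d, μ {ω | Y i ω = 1} = ENNReal.ofReal (q i))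
    (hindep : iIndepFun (fun i : Fin d => Y i) μ) : IsIndepUnitFamily Y q d μ where
  measurable i _ := hY i
  mem_Icc i _ ω := by rcases h01 i ω with h | h <;> simp [h]
  integral_eq i hi := integral_eq_of_zero_or_one (hY i) (h01 i) (hq i hi).1 (hμ i hi)
  indep := hindep

variable [IsProbabilityMeasure μ]

theorem integrable (h : IsIndepUnitFamily Y q d μ) {i : ℕ} (hi : i < d) : Integrable (Y i) μ :=
  .of_mem_Icc 0 1 (h.measurable i hi).aemeasurable (ae_of_all _ (h.mem_Icc i hi))

theorem star (h : IsIndepUnitFamily Y q d μ) {Ystar : ℕ → Ω → ℝ}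
    (hYstar : ∀ i ω, Ystar i ω = if q i ≤ 1 / 2 then Y i ω else 1 - Y i ω) :
    IsIndepUnitFamily Ystar (fun i => min (q i) (1 - q i)) d μ := by
  have hφ : ∀ i, Measurable fun x : ℝ => if q i ≤ 1 / 2 then x else 1 - x := fun i => by
    split_ifs <;> fun_prop
  have hYstar_eq : ∀ i, Ystar i = (fun x => if q i ≤ 1 / 2 then x else 1 - x) ∘ Y i :=
    fun i => funext (hYstar i)
  refine ⟨fun i hi => hYstar_eq i ▸ (hφ i).comp (h.measurable i hi), fun i hi ω => ?_,
    fun i hi => ?_, by simpa only [hYstar_eq] using h.indep.comp _ fun i => hφ i⟩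
  · obtain ⟨h0, h1⟩ := h.mem_Icc i hi ω
    rw [hYstar]
    split_ifs <;> exact ⟨by linarith, by linarith⟩
  · simp only [hYstar]
    exact integral_ite_le_half_one_sub (h.integrable hi) (h.integral_eq i hi)

theorem integral_mul_sum_comp (h : IsIndepUnitFamily Y q d μ)
    (hσ : Set.MapsTo σ (Set.Iio d) (Set.Iio d)) (hk : k ≤ d) (c : ℝ) :
    ∫ ω, c * ∑ j ∈ range k, Y (σ j) ω ∂μ = c * ∑ j ∈ range k, q (σ j) := by
  have hσk : ∀ j ∈ range k, σ j < d := fun j hj => hσ ((mem_range.1 hj).trans_le hk)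
  rw [integral_const_mul, integral_finsetSum _ fun j hj => h.integrable (hσk j hj)]
  exact congrArg _ (sum_congr rfl fun j hj => h.integral_eq _ (hσk j hj))

theorem memLp_mul_sum_comp (h : IsIndepUnitFamily Y q d μ)
    (hσ : Set.MapsTo σ (Set.Iio d) (Set.Iio d)) (hk : k ≤ d) (c : ℝ) :
    MemLp (fun ω => c * ∑ j ∈ range k, Y (σ j) ω) 2 μ := by
  have hσk : ∀ j ∈ range k, σ j < d := fun j hj => hσ ((mem_range.1 hj).trans_le hk)
  exact (memLp_finsetSum _ fun j hj => memLp_of_bounded (ae_of_all _ (h.mem_Icc _ (hσk j hj)))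
    (h.measurable _ (hσk j hj)).aestronglyMeasurable 2).const_mul c

theorem variance_mul_sum_comp_le (h : IsIndepUnitFamily Y q d μ)
    (hσ : Set.MapsTo σ (Set.Iio d) (Set.Iio d)) (hσinj : Set.InjOn σ (Set.Iio d)) (hk : k ≤ d) :
    Var[fun ω => 1 / (d : ℝ) * ∑ j ∈ range k, Y (σ j) ω; μ] ≤ 1 / (4 * d) := by
  have hσk : ∀ j ∈ range k, σ j < d := fun j hj => hσ ((mem_range.1 hj).trans_le hk)
  refine variance_mul_sum_le (by simpa using hk) (fun j hj => h.measurable _ (hσk j hj))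
    (fun j hj => h.mem_Icc _ (hσk j hj)) fun j hj j' hj' hne => ?_
  have hjd : j < d := (mem_range.1 hj).trans_le hk
  have hj'd : j' < d := (mem_range.1 hj').trans_le hk
  exact h.indep.indepFun (i := ⟨σ j, hσ hjd⟩) (j := ⟨σ j', hσ hj'd⟩)
    (Fin.ne_of_val_ne (hσinj.ne hjd hj'd hne))

end IsIndepUnitFamily

theorem tendsto_measure_abs_sub_ge_of_tendsto_variance {ι : Type*} {l : Filter ι}
    {Ω : ι → Type*} [∀ i, MeasurableSpace (Ω i)] {μ : ∀ i, Measure (Ω i)}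
    [∀ i, IsProbabilityMeasure (μ i)] {A : ∀ i, Ω i → ℝ} {L : ℝ}
    (hA : ∀ i, MemLp (A i) 2 (μ i)) (hmean : Tendsto (fun i => ∫ ω, A i ω ∂(μ i)) l (𝓝 L))
    (hvar : Tendsto (fun i => Var[A i; μ i]) l (𝓝 0)) {ε : ℝ} (hε : 0 < ε) :
    Tendsto (fun i => (μ i {ω | ε ≤ |A i ω - L|}).toReal) l (𝓝 0) := by
  refine squeeze_zero' (.of_forall fun _ => ENNReal.toReal_nonneg) ?_
    (by simpa using hvar.div_const ((ε / 2) ^ 2))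
  filter_upwards [hmean (Metric.ball_mem_nhds L (half_pos hε))] with i hi
  rw [Set.mem_preimage, Metric.mem_ball, Real.dist_eq] at hi
  have hsub : {ω | ε ≤ |A i ω - L|} ⊆ {ω | ε / 2 ≤ |A i ω - ∫ ω, A i ω ∂(μ i)|} := fun ω hω => by
    have := abs_sub_le (A i ω) (∫ ω, A i ω ∂(μ i)) L
    simp only [Set.mem_ofPred_eq] at hω ⊢
    linarith
  exact ENNReal.toReal_le_of_le_ofReal (div_nonneg (variance_nonneg _ _) (sq_nonneg _))
    ((measure_mono hsub).trans (meas_ge_le_variance_div_sq (hA i) (half_pos hε)))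

theorem stmt_9_general
    -- the triangular array of independent Bernoulli random variables
    {Ω : ℕ → Type*} [∀ d, MeasurableSpace (Ω d)]
    (μ : ∀ d, Measure (Ω d)) [∀ d, IsProbabilityMeasure (μ d)]
    (p : ℕ → ℕ → ℝ) (hp : ∀ d i, i < d → p d i ∈ Set.Icc (0 : ℝ) 1)
    (X : ∀ d, ℕ → Ω d → ℝ)
    (hmeas : ∀ d i, Measurable (X d i))
    (hval : ∀ d i ω, X d i ω = 0 ∨ X d i ω = 1)
    (hbern : ∀ d i, i < d → μ d {ω | X d i ω = 1} = ENNReal.ofReal (p d i))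
    (hindep : ∀ d, iIndepFun
      (fun i : Fin d => X d (i : ℕ)) (μ d))
    -- transformed quantities
    (pstar : ℕ → ℕ → ℝ)
    (hpstar : ∀ d i, pstar d i = min (p d i) (1 - p d i))
    (Xstar : ∀ d, ℕ → Ω d → ℝ)
    (hXstar : ∀ d i ω,
      Xstar d i ω = if p d i ≤ 1 / 2 then X d i ω else 1 - X d i ω)
    -- an ordering of {0,…,d−1} making `pstar` nondecreasing
    (ord : ℕ → ℕ → ℕ)
    (hord_bij : ∀ d, Set.BijOn (ord d) (Set.Iio d) (Set.Iio d))
    (hord_mono : ∀ d j j', j ≤ j' → j' < d →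
      pstar d (ord d j) ≤ pstar d (ord d j'))
    -- the stability assumption
    (F : ℝ → ℝ)
    (hF_mono : MonotoneOn F (Set.Icc 0 1))
    (hF0 : Tendsto F (nhdsWithin 0 (Set.Ioi 0)) (nhds 0))
    (hF1 : Tendsto F (nhdsWithin 1 (Set.Iio 1)) (nhds 1))
    (hstab : ∀ t ∈ Set.Icc (0 : ℝ) 1, ContinuousWithinAt F (Set.Icc 0 1) t →
      Tendsto (fun d : ℕ => (1 / (d : ℝ)) *
          ∑ i ∈ Finset.range d, (if p d i ≤ t then (1 : ℝ) else 0))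
        atTop (nhds (F t)))
    -- the transformed cdf and its quantile function
    (Fstar : ℝ → ℝ)
    (hFstar : ∀ t, Fstar t = if t ≤ 1 / 2 then F t + 1 - F (1 - t) else 1)
    (hFstar_cont : ContinuousOn Fstar (Set.Icc 0 1))
    (hFstar_mono : MonotoneOn Fstar (Set.Icc 0 1))
    (Qstar : ℝ → ℝ)
    (hQ : ∀ q, Qstar q = sInf {t | t ∈ Set.Icc (0 : ℝ) 1 ∧ q ≤ Fstar t})
    (β : ℝ) (hβ : β ∈ Set.Ioo (0 : ℝ) 1) :
    -- the mean of α̂_d(β) …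
    (∀ d : ℕ,
      (∫ ω, (1 / (d : ℝ)) * ∑ j ∈ Finset.range (Nat.floor (β * d)),
          Xstar d (ord d j) ω ∂(μ d))
        = (1 / (d : ℝ)) * ∑ j ∈ Finset.range (Nat.floor (β * d)),
            pstar d (ord d j)) ∧
    -- … converges to the limiting integral …
    Tendsto (fun d : ℕ => (1 / (d : ℝ)) *
        ∑ j ∈ Finset.range (Nat.floor (β * d)), pstar d (ord d j))
      atTop (nhds (∫ q in (0 : ℝ)..β, Qstar q)) ∧
    -- … the variance of α̂_d(β) is at most 1/(4d) …
    (∀ d : ℕ, 0 < d →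
      (∫ ω, ((1 / (d : ℝ)) * (∑ j ∈ Finset.range (Nat.floor (β * d)),
              Xstar d (ord d j) ω)
          - (1 / (d : ℝ)) * ∑ j ∈ Finset.range (Nat.floor (β * d)),
              pstar d (ord d j)) ^ 2 ∂(μ d))
        ≤ 1 / (4 * (d : ℝ))) ∧
    -- … and α̂_d(β) converges in probability to ∫_0^β Q*(q) dq
    (∀ ε : ℝ, 0 < ε →
      Tendsto (fun d : ℕ =>
          (μ d {ω | ε ≤ |(1 / (d : ℝ)) * (∑ j ∈ Finset.range (Nat.floor (β * d)),
              Xstar d (ord d j) ω) - ∫ q in (0 : ℝ)..β, Qstar q|}).toReal)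
        atTop (nhds 0)) := by
  have hk : ∀ d : ℕ, ⌊β * d⌋₊ ≤ d := Nat.floor_mul_le_self hβ.2.le
  have hXstar_family : ∀ d, IsIndepUnitFamily (Xstar d) (pstar d) d (μ d) := fun d => by
    rw [show pstar d = fun i => min (p d i) (1 - p d i) from funext (hpstar d)]
    exact (IsIndepUnitFamily.of_bernoulli (hmeas d) (hval d) (hp d) (hbern d) (hindep d)).star
      (hXstar d)
  have hmean : ∀ d : ℕ, ∫ ω, 1 / (d : ℝ) * ∑ j ∈ range ⌊β * d⌋₊, Xstar d (ord d j) ω ∂(μ d)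
      = 1 / (d : ℝ) * ∑ j ∈ range ⌊β * d⌋₊, pstar d (ord d j) := fun d =>
    (hXstar_family d).integral_mul_sum_comp (hord_bij d).mapsTo (hk d) _
  have hmean_lim : Tendsto (fun d : ℕ => 1 / (d : ℝ) * ∑ j ∈ range ⌊β * d⌋₊, pstar d (ord d j))
      atTop (𝓝 (∫ q in (0 : ℝ)..β, Qstar q)) := by
    rw [show Qstar = quantile Fstar from funext hQ]
    exact tendsto_sum_sorted_div_intervalIntegral_quantile hp hpstar hord_bij
      (fun d j hj j' hj' hjj' => hord_mono d j j' hjj' hj') hF_mono hF0 hF1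
      (fun t ht hc => (hstab t ht hc).congr fun d => (empiricalCDF_eq_mul_sum _ _ _).symm)
      (fun t ht => by rw [hFstar, if_pos ht]) hFstar_cont hFstar_mono hβ
  have hvar : ∀ d : ℕ, Var[fun ω => 1 / (d : ℝ) * ∑ j ∈ range ⌊β * d⌋₊, Xstar d (ord d j) ω;
      μ d] ≤ 1 / (4 * d) := fun d =>
    (hXstar_family d).variance_mul_sum_comp_le (hord_bij d).mapsTo (hord_bij d).injOn (hk d)
  refine ⟨hmean, hmean_lim, fun d _ => ?_, fun ε hε => ?_⟩
  · rw [← hmean d, ← variance_eq_integral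
      ((hXstar_family d).memLp_mul_sum_comp (hord_bij d).mapsTo (hk d) _).aemeasurable]
    exact hvar d
  · refine tendsto_measure_abs_sub_ge_of_tendsto_variance
      (fun d => (hXstar_family d).memLp_mul_sum_comp (hord_bij d).mapsTo (hk d) _)
      (hmean_lim.congr fun d => (hmean d).symm)
      (squeeze_zero (fun d => variance_nonneg _ _) hvar ?_) hε
    simpa only [div_div] using tendsto_const_div_atTop_nhds_zero_nat (1 / 4 : ℝ)

theorem stmt_9
    -- the triangular array of independent Bernoulli random variables
    {Ω : ℕ → Type*} [∀ d, MeasurableSpace (Ω d)]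
    (μ : ∀ d, Measure (Ω d)) [∀ d, IsProbabilityMeasure (μ d)]
    (p : ℕ → ℕ → ℝ) (hp : ∀ d i, i < d → p d i ∈ Set.Icc (0 : ℝ) 1)
    (X : ∀ d, ℕ → Ω d → ℝ)
    (hmeas : ∀ d i, Measurable (X d i))
    (hval : ∀ d i ω, X d i ω = 0 ∨ X d i ω = 1)
    (hbern : ∀ d i, i < d → μ d {ω | X d i ω = 1} = ENNReal.ofReal (p d i))
    (hindep : ∀ d, iIndepFun
      (fun i : Fin d => X d (i : ℕ)) (μ d))
    -- transformed quantities
    (pstar : ℕ → ℕ → ℝ)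
    (hpstar : ∀ d i, pstar d i = min (p d i) (1 - p d i))
    (Xstar : ∀ d, ℕ → Ω d → ℝ)
    (hXstar : ∀ d i ω,
      Xstar d i ω = if p d i ≤ 1 / 2 then X d i ω else 1 - X d i ω)
    -- an ordering of {0,…,d−1} making `pstar` nondecreasing
    (ord : ℕ → ℕ → ℕ)
    (hord_bij : ∀ d, Set.BijOn (ord d) (Set.Iio d) (Set.Iio d))
    (hord_mono : ∀ d j j', j ≤ j' → j' < d →
      pstar d (ord d j) ≤ pstar d (ord d j'))
    -- the stability assumption
    (F : ℝ → ℝ)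
    (hF_mono : MonotoneOn F (Set.Icc 0 1))
    (hF_rc : ∀ t ∈ Set.Ico (0 : ℝ) 1,
      Tendsto F (nhdsWithin t (Set.Ioi t)) (nhds (F t)))
    (hF0 : Tendsto F (nhdsWithin 0 (Set.Ioi 0)) (nhds 0))
    (hF1 : Tendsto F (nhdsWithin 1 (Set.Iio 1)) (nhds 1))
    (hstab : ∀ t ∈ Set.Icc (0 : ℝ) 1, ContinuousWithinAt F (Set.Icc 0 1) t →
      Tendsto (fun d : ℕ => (1 / (d : ℝ)) *
          ∑ i ∈ Finset.range d, (if p d i ≤ t then (1 : ℝ) else 0))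
        atTop (nhds (F t)))
    -- the transformed cdf and its quantile function
    (Fstar : ℝ → ℝ)
    (hFstar : ∀ t, Fstar t = if t ≤ 1 / 2 then F t + 1 - F (1 - t) else 1)
    (hFstar_cont : ContinuousOn Fstar (Set.Icc 0 1))
    (hFstar_mono : MonotoneOn Fstar (Set.Icc 0 1))
    (Qstar : ℝ → ℝ)
    (hQ : ∀ q, Qstar q = sInf {t | t ∈ Set.Icc (0 : ℝ) 1 ∧ q ≤ Fstar t})
    (β : ℝ) (hβ : β ∈ Set.Ioo (0 : ℝ) 1) :
    -- the mean of α̂_d(β) …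
    (∀ d : ℕ,
      (∫ ω, (1 / (d : ℝ)) * ∑ j ∈ Finset.range (Nat.floor (β * d)),
          Xstar d (ord d j) ω ∂(μ d))
        = (1 / (d : ℝ)) * ∑ j ∈ Finset.range (Nat.floor (β * d)),
            pstar d (ord d j)) ∧
    -- … converges to the limiting integral …
    Tendsto (fun d : ℕ => (1 / (d : ℝ)) *
        ∑ j ∈ Finset.range (Nat.floor (β * d)), pstar d (ord d j))
      atTop (nhds (∫ q in (0 : ℝ)..β, Qstar q)) ∧
    -- … the variance of α̂_d(β) is at most 1/(4d) …
    (∀ d : ℕ, 0 < d →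
      (∫ ω, ((1 / (d : ℝ)) * (∑ j ∈ Finset.range (Nat.floor (β * d)),
              Xstar d (ord d j) ω)
          - (1 / (d : ℝ)) * ∑ j ∈ Finset.range (Nat.floor (β * d)),
              pstar d (ord d j)) ^ 2 ∂(μ d))
        ≤ 1 / (4 * (d : ℝ))) ∧
    -- … and α̂_d(β) converges in probability to ∫_0^β Q*(q) dq
    (∀ ε : ℝ, 0 < ε →
      Tendsto (fun d : ℕ =>
          (μ d {ω | ε ≤ |(1 / (d : ℝ)) * (∑ j ∈ Finset.range (Nat.floor (β * d)),
              Xstar d (ord d j) ω) - ∫ q in (0 : ℝ)..β, Qstar q|}).toReal)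
        atTop (nhds 0)) :=
  stmt_9_general μ p hp X hmeas hval hbern hindep pstar hpstar Xstar hXstar ord hord_bij hord_mono F
    hF_mono hF0 hF1 hstab Fstar hFstar hFstar_cont hFstar_mono Qstar hQ β hβ
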